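/- arXiv:2112.15361 — 5 statements merged into one kernel-verified Lean document; each statement's English description precedes it below -/
import Mathlib

section
/- Let I = (G, L) be an SMP instance, let M be a matching of G having exactly k blocking edges with respect to L, and let σ be a single swap. Then M has at least k − 1 blocking edges with respect to the preference lists σ(L). -/
/-- Preference lists: for each vertex on side `α` a list of neighbors in `β`,
and vice versa (most preferred first). -/
structure Prefs (α β : Type*) where
  fA : α → List β
  fB : β → List α

/-- `l'` is obtained from `l` by one adjacent transposition (swap). -/
def AdjSwap {γ : Type*} (l l' : List γ) : Prop :=
  ∃ (p s : List γ) (x y : γ), l = p ++ x :: y :: s ∧ l' = p ++ y :: x :: s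

/-- One swap applied to a set of preference lists: exactly one list changes,
by one adjacent transposition. -/
def SwapStep {α β : Type*} (L L' : Prefs α β) : Prop :=
  (∃ a, AdjSwap (L.fA a) (L'.fA a) ∧ (∀ a', a' ≠ a → L'.fA a' = L.fA a') ∧
      (∀ b, L'.fB b = L.fB b)) ∨
  (∃ b, AdjSwap (L.fB b) (L'.fB b) ∧ (∀ b', b' ≠ b → L'.fB b' = L.fB b') ∧
      (∀ a, L'.fA a = L.fA a))

/-- `SwapSeq k L L'` : `L'` is obtained from `L` by a sequence of `k` swaps. -/
def SwapSeq {α β : Type*} : ℕ → Prefs α β → Prefs α β → Prop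
  | 0, L, L' => L' = L
  | k + 1, L, L' => ∃ L'', SwapStep L L'' ∧ SwapSeq k L'' L'

/-- The preference lists are valid for the bipartite graph with edge set `E`:
each list is duplicate-free and consists exactly of the neighbors. -/
def ValidPrefs {α β : Type*} (E : Finset (α × β)) (L : Prefs α β) : Prop :=
  (∀ a, (L.fA a).Nodup) ∧ (∀ b, (L.fB b).Nodup) ∧
  (∀ a b, b ∈ L.fA a ↔ (a, b) ∈ E) ∧ (∀ a b, a ∈ L.fB b ↔ (a, b) ∈ E)

/-- In the list `l`, `x` is preferred to `y` (occurs strictly earlier). -/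
def PrefersIn {γ : Type*} [DecidableEq γ] (l : List γ) (x y : γ) : Prop :=
  x ∈ l ∧ l.idxOf x < l.idxOf y

/-- `M` is a matching of the bipartite graph with edge set `E`. -/
def IsMatching {α β : Type*} (E M : Finset (α × β)) : Prop :=
  M ⊆ E ∧ ∀ e ∈ M, ∀ e' ∈ M, (e.1 = e'.1 ∨ e.2 = e'.2) → e = e'

/-- `e` is a blocking edge of the matching `M` w.r.t. preference lists `L`. -/
def Blocking {α β : Type*} [DecidableEq α] [DecidableEq β]
    (E : Finset (α × β)) (L : Prefs α β) (M : Finset (α × β)) (e : α × β) : Prop :=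
  e ∈ E ∧ e ∉ M ∧
  ((∀ b, (e.1, b) ∉ M) ∨ ∃ b, (e.1, b) ∈ M ∧ PrefersIn (L.fA e.1) e.2 b) ∧
  ((∀ a, (a, e.2) ∉ M) ∨ ∃ a, (a, e.2) ∈ M ∧ PrefersIn (L.fB e.2) e.1 a)

/-- `M` is a stable matching w.r.t. preference lists `L`. -/
def StableM {α β : Type*} [DecidableEq α] [DecidableEq β]
    (E : Finset (α × β)) (L : Prefs α β) (M : Finset (α × β)) : Prop :=
  ∀ e, ¬ Blocking E L M e

/-! A swap of the adjacent entries `x, y` in the list of a vertex `w` changes no preference other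
than `w`'s preference for `x` over `y`, so the only edge that can stop blocking is `wx`. Hence
the blocking edges under `L` lie in those under `σ(L)` together with one extra edge. -/

namespace List

variable {γ : Type*} [DecidableEq γ]

theorem idxOf_append_cons_cons_swap {p s : List γ} {x y : γ} (hx : x ∉ p) (hy : y ∉ p)
    (hxy : x ≠ y) (z : γ) :
    (p ++ y :: x :: s).idxOf z =
      Equiv.swap p.length (p.length + 1) ((p ++ x :: y :: s).idxOf z) := by
  by_cases hz : z ∈ p
  · have := idxOf_lt_length_of_mem hz
    rw [idxOf_append_of_mem hz, idxOf_append_of_mem hz,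
      Equiv.swap_apply_of_ne_of_ne (by omega) (by omega)]
  rw [idxOf_append_of_notMem hz, idxOf_append_of_notMem hz]
  by_cases hzx : z = x
  · subst hzx; simp [hxy.symm]
  by_cases hzy : z = y
  · subst hzy; simp [hxy]
  simp only [idxOf_cons_ne _ (Ne.symm hzx), idxOf_cons_ne _ (Ne.symm hzy)]
  rw [Equiv.swap_apply_of_ne_of_ne (by omega) (by omega)]

end List

theorem Nat.swap_succ_lt_swap_succ {i j n : ℕ} (hij : i < j) (hi : i ≠ n) :
    Equiv.swap n (n + 1) i < Equiv.swap n (n + 1) j := by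
  simp only [Equiv.swap_apply_def]
  split_ifs <;> omega

section Swap

variable {γ : Type*} [DecidableEq γ] {p s : List γ} {x y u : γ}

theorem PrefersIn.eq_of_not_prefersIn_swap {v : γ} (hnd : (p ++ x :: y :: s).Nodup)
    (h : PrefersIn (p ++ x :: y :: s) u v) (h' : ¬ PrefersIn (p ++ y :: x :: s) u v) :
    u = x := by
  have hdisj := List.nodup_append.1 hnd
  have hx : x ∉ p := fun hx => hdisj.2.2 x hx x (by simp) rfl
  have hy : y ∉ p := fun hy => hdisj.2.2 y hy y (by simp) rfl
  have hxy : x ≠ y := by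
    rintro rfl
    exact (List.nodup_cons.1 hdisj.2.1).1 List.mem_cons_self
  obtain ⟨hu, hlt⟩ := h
  by_contra hne
  refine h' ⟨(List.Perm.append_left p (List.Perm.swap y x s)).mem_iff.1 hu, ?_⟩
  rw [List.idxOf_append_cons_cons_swap hx hy hxy, List.idxOf_append_cons_cons_swap hx hy hxy]
  refine Nat.swap_succ_lt_swap_succ hlt fun hidx => hne ?_
  rw [← List.idxOf_inj hu, hidx, List.idxOf_append_of_notMem hx, List.idxOf_cons_self,
    Nat.add_zero]

theorem eq_of_prefersIn_or_forall_not_swap {Q : γ → Prop} (hnd : (p ++ x :: y :: s).Nodup)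
    (h : (∀ v, ¬ Q v) ∨ ∃ v, Q v ∧ PrefersIn (p ++ x :: y :: s) u v)
    (h' : ¬ ((∀ v, ¬ Q v) ∨ ∃ v, Q v ∧ PrefersIn (p ++ y :: x :: s) u v)) : u = x := by
  rcases h with hfree | ⟨v, hv, hpref⟩
  · exact absurd (Or.inl hfree) h'
  · exact hpref.eq_of_not_prefersIn_swap hnd fun hpref' => h' (Or.inr ⟨v, hv, hpref'⟩)

end Swap

section Blocking

variable {α β : Type*} [DecidableEq α] [DecidableEq β] {E M : Finset (α × β)} {L L' : Prefs α β}

theorem blocking_congr {e : α × β} (hA : L'.fA e.1 = L.fA e.1) (hB : L'.fB e.2 = L.fB e.2) :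
    Blocking E L' M e ↔ Blocking E L M e := by
  simp only [Blocking, hA, hB]

theorem SwapStep.exists_eq_of_blocking_of_not_blocking (hswap : SwapStep L L')
    (hA : ∀ a, (L.fA a).Nodup) (hB : ∀ b, (L.fB b).Nodup) :
    ∃ e₀, ∀ e, Blocking E L M e → ¬ Blocking E L' M e → e = e₀ := by
  rcases hswap with ⟨a₀, ⟨p, s, x, y, hl, hl'⟩, hfA, hfB⟩ |
    ⟨b₀, ⟨p, s, x, y, hl, hl'⟩, hfB, hfA⟩
  · refine ⟨(a₀, x), fun ⟨a, b⟩ he he' => ?_⟩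
    obtain rfl | ha := eq_or_ne a a₀
    · obtain ⟨hE, hM, hpa, hpb⟩ := he
      have hbx : b = x := eq_of_prefersIn_or_forall_not_swap (hl ▸ hA a) (hl ▸ hpa)
        (hl' ▸ fun hpa' => he' ⟨hE, hM, hpa', (hfB b).symm ▸ hpb⟩)
      rw [hbx]
    · exact absurd ((blocking_congr (hfA a ha) (hfB b)).2 he) he'
  · refine ⟨(x, b₀), fun ⟨a, b⟩ he he' => ?_⟩
    obtain rfl | hb := eq_or_ne b b₀
    · obtain ⟨hE, hM, hpa, hpb⟩ := he
      have hax : a = x := eq_of_prefersIn_or_forall_not_swap (hl ▸ hB b) (hl ▸ hpb)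
        (hl' ▸ fun hpb' => he' ⟨hE, hM, (hfA a).symm ▸ hpa, hpb'⟩)
      rw [hax]
    · exact absurd ((blocking_congr (hfA a) (hfB b hb)).2 he) he'

end Blocking

theorem blocking_edges_after_one_swap_general {α β : Type*} [DecidableEq α] [DecidableEq β]
    (E : Finset (α × β)) (L L' : Prefs α β) (M : Finset (α × β)) (k : ℕ)
    (hL : ValidPrefs E L)
    (hexact : {e : α × β | Blocking E L M e}.ncard = k)
    (hswap : SwapStep L L') :
    k - 1 ≤ {e : α × β | Blocking E L' M e}.ncard := by
  obtain ⟨e₀, he₀⟩ := hswap.exists_eq_of_blocking_of_not_blocking (E := E) (M := M) hL.1 hL.2.1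
  have hfin : {e | Blocking E L' M e}.Finite := E.finite_toSet.subset fun _ he => he.1
  have hsub : {e | Blocking E L M e} ⊆ insert e₀ {e | Blocking E L' M e} := fun e he =>
    (em (Blocking E L' M e)).elim Or.inr fun he' => Or.inl (he₀ e he he')
  have hcard := (Set.ncard_le_ncard hsub (hfin.insert e₀)).trans (Set.ncard_insert_le _ _)
  omega

/-- If a matching `M` has exactly `k` blocking edges and one swap
`σ` is applied, then `M` has at least `k - 1` blocking edges afterwards. -/
theorem blocking_edges_after_one_swap {α β : Type*} [DecidableEq α] [DecidableEq β]
    (E : Finset (α × β)) (L L' : Prefs α β) (M : Finset (α × β)) (k : ℕ)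
    (hL : ValidPrefs E L) (hM : IsMatching E M)
    (hexact : {e : α × β | Blocking E L M e}.ncard = k)
    (hswap : SwapStep L L') :
    k - 1 ≤ {e : α × β | Blocking E L' M e}.ncard :=
  blocking_edges_after_one_swap_general E L L' M k hL hexact hswap
end

section
/- Let I = (G, L) be an SMP instance and let L' be obtained from L by applying a sequence of k swaps. If M is a matching of G that is stable with respect to L', then M has at most k blocking edges with respect to L. -/
/-! Swapping adjacent entries `x, y` in the list of a vertex `a` changes only the relative order of
`x` and `y`, so the only edge that can block before the swap and not after it is `(a, x)`. Hence each
swap removes at most one blocking edge. -/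

namespace List

variable {γ : Type*} [DecidableEq γ]

theorem idxOf_lt_idxOf_swap {p s : List γ} {x y u v : γ} (hu : u ≠ x)
    (h : (p ++ x :: y :: s).idxOf u < (p ++ x :: y :: s).idxOf v) :
    (p ++ y :: x :: s).idxOf u < (p ++ y :: x :: s).idxOf v := by
  induction p with
  | nil =>
    simp only [nil_append, idxOf_cons, cond_eq_ite, beq_iff_eq] at h ⊢
    split_ifs at h ⊢ <;> simp_all
  | cons a p ih =>
    simp only [cons_append, idxOf_cons, cond_eq_ite, beq_iff_eq] at h ⊢
    split_ifs at h ⊢ <;> simp_all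

end List

section Swap

variable {γ : Type*}

theorem AdjSwap.perm {l l' : List γ} (h : AdjSwap l l') : l'.Perm l := by
  obtain ⟨p, s, x, y, rfl, rfl⟩ := h
  exact .append_left p (.swap x y s)

theorem PrefersIn.swap [DecidableEq γ] {p s : List γ} {x y u v : γ}
    (h : PrefersIn (p ++ x :: y :: s) u v) (hu : u ≠ x) :
    PrefersIn (p ++ y :: x :: s) u v :=
  ⟨(AdjSwap.perm ⟨p, s, x, y, rfl, rfl⟩).mem_iff.mpr h.1, List.idxOf_lt_idxOf_swap hu h.2⟩

def WouldAccept [DecidableEq γ] (l : List γ) (P : γ → Prop) (c : γ) : Prop :=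
  (∀ d, ¬ P d) ∨ ∃ d, P d ∧ PrefersIn l c d

theorem WouldAccept.swap [DecidableEq γ] {p s : List γ} {x y c : γ} {P : γ → Prop}
    (h : WouldAccept (p ++ x :: y :: s) P c) (hc : c ≠ x) :
    WouldAccept (p ++ y :: x :: s) P c :=
  h.imp_right fun ⟨d, hd, hpref⟩ => ⟨d, hd, hpref.swap hc⟩

end Swap

section Blocking

variable {α β : Type*} [DecidableEq α] [DecidableEq β]

theorem blocking_iff {E : Finset (α × β)} {L : Prefs α β} {M : Finset (α × β)} {e : α × β} :
    Blocking E L M e ↔ e ∈ E ∧ e ∉ M ∧ WouldAccept (L.fA e.1) (fun b => (e.1, b) ∈ M) e.2 ∧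
      WouldAccept (L.fB e.2) (fun a => (a, e.2) ∈ M) e.1 :=
  Iff.rfl

theorem SwapStep.exists_blocking_subset_insert {E : Finset (α × β)} {L L' : Prefs α β}
    (M : Finset (α × β)) (hstep : SwapStep L L') :
    ∃ f, {e | Blocking E L M e} ⊆ insert f {e | Blocking E L' M e} := by
  rcases hstep with ⟨a, ⟨p, s, x, y, hl, hl'⟩, hother, hB⟩ | ⟨b, ⟨p, s, x, y, hl, hl'⟩, hother, hA⟩
  · refine ⟨(a, x), fun ⟨a', b'⟩ he => or_iff_not_imp_left.mpr fun hne => ?_⟩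
    obtain ⟨hE, hnotM, hacceptA, hacceptB⟩ := blocking_iff.mp he
    refine blocking_iff.mpr ⟨hE, hnotM, ?_, hB b' ▸ hacceptB⟩
    by_cases ha' : a' = a
    · subst ha'
      rw [hl] at hacceptA
      rw [hl']
      exact hacceptA.swap fun h : b' = x => hne (h ▸ rfl)
    · exact hother a' ha' ▸ hacceptA
  · refine ⟨(x, b), fun ⟨a', b'⟩ he => or_iff_not_imp_left.mpr fun hne => ?_⟩
    obtain ⟨hE, hnotM, hacceptA, hacceptB⟩ := blocking_iff.mp he
    refine blocking_iff.mpr ⟨hE, hnotM, hA a' ▸ hacceptA, ?_⟩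
    by_cases hb' : b' = b
    · subst hb'
      rw [hl] at hacceptB
      rw [hl']
      exact hacceptB.swap fun h : a' = x => hne (h ▸ rfl)
    · exact hother b' hb' ▸ hacceptB

theorem SwapStep.ncard_blocking_le {E : Finset (α × β)} {L L' : Prefs α β}
    (M : Finset (α × β)) (hstep : SwapStep L L') :
    {e | Blocking E L M e}.ncard ≤ {e | Blocking E L' M e}.ncard + 1 := by
  obtain ⟨f, hsub⟩ := hstep.exists_blocking_subset_insert (E := E) M
  have hfin : {e | Blocking E L' M e}.Finite := E.finite_toSet.subset fun _ he => he.1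
  exact (Set.ncard_le_ncard hsub (hfin.insert f)).trans (Set.ncard_insert_le f _)

end Blocking

theorem blocking_edges_le_of_stable_after_swaps_general {α β : Type*} [DecidableEq α] [DecidableEq β]
    (E : Finset (α × β)) (L L' : Prefs α β) (M : Finset (α × β)) (k : ℕ)
    (hseq : SwapSeq k L L')
    (hstable : StableM E L' M) :
    {e : α × β | Blocking E L M e}.ncard ≤ k := by
  induction k generalizing L with
  | zero =>
    obtain rfl : L' = L := hseq
    rw [Set.eq_empty_of_forall_notMem (s := {e | Blocking E L' M e}) hstable, Set.ncard_empty]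
  | succ k ih =>
    obtain ⟨L'', hstep, hseq''⟩ := hseq
    exact (hstep.ncard_blocking_le M).trans (Nat.add_le_add_right (ih L'' hseq'') 1)

/-- If `L'` is obtained from `L` by `k` swaps and the matching `M`
is stable w.r.t. `L'`, then `M` has at most `k` blocking edges w.r.t. `L`. -/
theorem blocking_edges_le_of_stable_after_swaps {α β : Type*} [DecidableEq α] [DecidableEq β]
    (E : Finset (α × β)) (L L' : Prefs α β) (M : Finset (α × β)) (k : ℕ)
    (hL : ValidPrefs E L) (hM : IsMatching E M)
    (hseq : SwapSeq k L L')
    (hstable : StableM E L' M) :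
    {e : α × β | Blocking E L M e}.ncard ≤ k :=
  blocking_edges_le_of_stable_after_swaps_general E L L' M k hseq hstable
end

section
/- For every n ≥ 1, let G be the path v₀ v₁ … v_{2n+1} (a bipartite graph on 2n + 2 vertices) with preference lists such that for every i ∈ {1, …, n}, vertex v_{2i} prefers v_{2i−1} over v_{2i+1} and vertex v_{2i−1} prefers v_{2i} over v_{2i−2}. Then: (a) G admits a perfect matching; (b) M = {v₁v₂, v₃v₄, …, v_{2n−1}v_{2n}} is the unique stable matching of this instance, and it leaves exactly two vertices unmatched; (c) every sequence of swaps that transforms the preference lists into lists for which G admits a perfect stable matching has length at least n. -/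
/-- The path `v₀ v₁ … v_{2n+1}` as a bipartite graph: side `A` consists of the
even-indexed vertices (`a_i = v_{2i}`, `i ≤ n`) and side `B` of the odd-indexed
vertices (`b_j = v_{2j+1}`, `j ≤ n`).  Its edges are `v_{2i} v_{2i+1}`, i.e.
`(i, i)`, and `v_{2j+1} v_{2j+2}`, i.e. `(j+1, j)`. -/
def pathE (n : ℕ) : Finset (ℕ × ℕ) :=
  (Finset.range (n + 1)).image (fun i => (i, i)) ∪
    (Finset.range n).image (fun j => (j + 1, j))

/-- The preference lists of the path instance: for `1 ≤ i ≤ n`, vertex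
`v_{2i}` (= `a_i`) prefers `v_{2i-1}` (= `b_{i-1}`) over `v_{2i+1}` (= `b_i`),
and `v_{2i-1}` (= `b_{i-1}`) prefers `v_{2i}` (= `a_i`) over `v_{2i-2}` (= `a_{i-1}`). -/
def pathL (n : ℕ) : Prefs ℕ ℕ where
  fA := fun i => if i = 0 then [0] else if i ≤ n then [i - 1, i] else []
  fB := fun j => if j < n then [j + 1, j] else if j = n then [n] else []

/-- The matching `M = {v₁v₂, v₃v₄, …, v_{2n-1}v_{2n}}`, i.e. `{(i+1, i) : i < n}`. -/
def pathM (n : ℕ) : Finset (ℕ × ℕ) := (Finset.range n).image (fun j => (j + 1, j))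



/-!
The only perfect matching of the path is the "diagonal" one `{(i, i) : i ≤ n}`. Under
`pathL n` each of the `n` edges `(i + 1, i)` joins two vertices that prefer each other to
their diagonal partners, so each of them blocks the diagonal matching. A swap changes a
single list, and each list takes part in at most one of these `n` mutual preferences, so
at least `n` swaps are needed before the diagonal matching can become stable.
-/

open Finset

section Lists

variable {γ : Type*} [DecidableEq γ] {x y : γ}

lemma prefersIn_pair (h : x ≠ y) : PrefersIn [x, y] x y := by
  refine ⟨by simp, ?_⟩
  rw [List.idxOf_cons_self, List.idxOf_cons_ne _ h]
  simp

lemma not_prefersIn_pair (h : x ≠ y) : ¬ PrefersIn [x, y] y x := by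
  rintro ⟨-, hlt⟩
  rw [List.idxOf_cons_self, List.idxOf_cons_ne _ h] at hlt
  simp at hlt

end Lists

lemma SwapSeq.le_add {α β : Type*} (f : Prefs α β → ℕ)
    (hf : ∀ L L', SwapStep L L' → f L ≤ f L' + 1) :
    ∀ {k : ℕ} {L L' : Prefs α β}, SwapSeq k L L' → f L ≤ f L' + k
  | 0, _, _, h => by subst h; simp
  | _ + 1, _, _, ⟨_, hstep, hseq⟩ => by
    have := hf _ _ hstep
    have := SwapSeq.le_add f hf hseq
    omega

lemma IsMatching.eq_of_mem {α β : Type*} {E M : Finset (α × β)} (hM : IsMatching E M)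
    {e e' : α × β} (he : e ∈ M) (he' : e' ∈ M) (h : e.1 = e'.1 ∨ e.2 = e'.2) : e = e' :=
  hM.2 e he e' he' h

section Path

variable {n a b : ℕ}

lemma mem_pathE : (a, b) ∈ pathE n ↔ (a = b ∧ b ≤ n) ∨ (a = b + 1 ∧ b < n) := by
  simp only [pathE, mem_union, mem_image, mem_range, Prod.mk.injEq]
  constructor
  · rintro (⟨i, hi, h1, h2⟩ | ⟨j, hj, h1, h2⟩) <;> omega
  · rintro (⟨h1, h2⟩ | ⟨h1, h2⟩)
    · exact Or.inl ⟨b, by omega, by omega, rfl⟩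
    · exact Or.inr ⟨b, by omega, by omega, rfl⟩

lemma mem_pathM : (a, b) ∈ pathM n ↔ a = b + 1 ∧ b < n := by
  simp only [pathM, mem_image, mem_range, Prod.mk.injEq]
  constructor
  · rintro ⟨j, hj, h1, h2⟩
    omega
  · rintro ⟨h1, h2⟩
    exact ⟨b, by omega, by omega, rfl⟩

lemma pathL_fA (ha : 0 < a) (han : a ≤ n) : (pathL n).fA a = [a - 1, a] := by
  simp only [pathL]
  rw [if_neg (by omega), if_pos han]

lemma pathL_fB (hb : b < n) : (pathL n).fB b = [b + 1, b] := by
  simp only [pathL]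
  rw [if_pos hb]

def diagM (n : ℕ) : Finset (ℕ × ℕ) := (range (n + 1)).image fun i => (i, i)

lemma mem_diagM : (a, b) ∈ diagM n ↔ a = b ∧ b ≤ n := by
  simp only [diagM, mem_image, mem_range, Prod.mk.injEq]
  constructor
  · rintro ⟨i, hi, rfl, rfl⟩
    omega
  · rintro ⟨rfl, hb⟩
    exact ⟨a, by omega, rfl, rfl⟩

lemma isMatching_diagM : IsMatching (pathE n) (diagM n) := by
  refine ⟨fun ⟨a, b⟩ he => mem_pathE.mpr (Or.inl (mem_diagM.mp he)), ?_⟩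
  rintro ⟨a, b⟩ he ⟨a', b'⟩ he'
  obtain ⟨rfl, -⟩ := mem_diagM.mp he
  obtain ⟨rfl, -⟩ := mem_diagM.mp he'
  rintro (rfl | rfl) <;> rfl

lemma diagM_subset_of_covers {M : Finset (ℕ × ℕ)} (hM : IsMatching (pathE n) M)
    (hcov : ∀ a ≤ n, ∃ b, (a, b) ∈ M) : diagM n ⊆ M := by
  suffices h : ∀ i ≤ n, (i, i) ∈ M by
    rintro ⟨a, b⟩ he
    obtain ⟨rfl, hb⟩ := mem_diagM.mp he
    exact h a hb
  intro i
  induction i with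
  | zero =>
    intro h0
    obtain ⟨b, hb⟩ := hcov 0 h0
    rcases mem_pathE.mp (hM.1 hb) with ⟨rfl, -⟩ | ⟨h, -⟩
    · exact hb
    · omega
  | succ i ih =>
    intro hi
    obtain ⟨b, hb⟩ := hcov (i + 1) hi
    rcases mem_pathE.mp (hM.1 hb) with ⟨rfl, -⟩ | ⟨hib, -⟩
    · exact hb
    · obtain rfl : b = i := by omega
      cases hM.eq_of_mem hb (ih (by omega)) (Or.inr rfl)

lemma isMatching_pathM : IsMatching (pathE n) (pathM n) := by
  refine ⟨fun ⟨a, b⟩ he => mem_pathE.mpr (Or.inr (mem_pathM.mp he)), ?_⟩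
  rintro ⟨a, b⟩ he ⟨a', b'⟩ he'
  obtain ⟨rfl, -⟩ := mem_pathM.mp he
  obtain ⟨rfl, -⟩ := mem_pathM.mp he'
  rintro (h | rfl)
  · simp only [add_left_inj] at h
    rw [h]
  · rfl

lemma stableM_pathM (hn : 1 ≤ n) : StableM (pathE n) (pathL n) (pathM n) := by
  rintro ⟨a, b⟩ ⟨hE, hnotM, hA, hB⟩
  rcases mem_pathE.mp hE with ⟨rfl, ha⟩ | hab
  · rcases Nat.eq_zero_or_pos a with rfl | hpos
    · -- `b_0` holds its first choice `a_1`
      rcases hB with hfree | ⟨a', ha', hpref⟩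
      · exact hfree 1 (mem_pathM.mpr ⟨rfl, hn⟩)
      · obtain ⟨rfl, -⟩ := mem_pathM.mp ha'
        rw [pathL_fB hn] at hpref
        exact not_prefersIn_pair one_ne_zero hpref
    · -- `a_a` holds its first choice `b_{a-1}`
      rcases hA with hfree | ⟨b', hb', hpref⟩
      · exact hfree (a - 1) (mem_pathM.mpr ⟨by omega, by omega⟩)
      · obtain ⟨hab', -⟩ := mem_pathM.mp hb'
        obtain rfl : b' = a - 1 := by omega
        rw [pathL_fA hpos ha] at hpref
        exact not_prefersIn_pair (by omega) hpref
  · exact hnotM (mem_pathM.mpr hab)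

lemma pathM_subset_of_stableM {M : Finset (ℕ × ℕ)} (hM : IsMatching (pathE n) M)
    (hS : StableM (pathE n) (pathL n) M) : pathM n ⊆ M := by
  rintro ⟨a, b⟩ he
  obtain ⟨rfl, hb⟩ := mem_pathM.mp he
  by_contra hnotM
  refine hS (b + 1, b) ⟨mem_pathE.mpr (Or.inr ⟨rfl, hb⟩), hnotM, ?_, ?_⟩
  · by_cases hfree : ∀ b', (b + 1, b') ∉ M
    · exact Or.inl hfree
    obtain ⟨b', hb'⟩ := not_forall_not.mp hfree
    rcases mem_pathE.mp (hM.1 hb') with ⟨hbb', -⟩ | ⟨hbb', -⟩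
    · obtain rfl : b' = b + 1 := by omega
      refine Or.inr ⟨b + 1, hb', ?_⟩
      rw [pathL_fA (by omega) (by omega), Nat.add_sub_cancel]
      exact prefersIn_pair (by omega)
    · obtain rfl : b' = b := by omega
      exact absurd hb' hnotM
  · by_cases hfree : ∀ a, (a, b) ∉ M
    · exact Or.inl hfree
    obtain ⟨a, ha⟩ := not_forall_not.mp hfree
    rcases mem_pathE.mp (hM.1 ha) with ⟨rfl, -⟩ | ⟨rfl, -⟩
    · refine Or.inr ⟨a, ha, ?_⟩
      rw [pathL_fB hb]
      exact prefersIn_pair (by omega)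
    · exact absurd ha hnotM

lemma eq_pathM_of_stableM (hn : 1 ≤ n) {M : Finset (ℕ × ℕ)} (hM : IsMatching (pathE n) M)
    (hS : StableM (pathE n) (pathL n) M) : M = pathM n := by
  have hsub := pathM_subset_of_stableM hM hS
  refine Subset.antisymm ?_ hsub
  rintro ⟨a, b⟩ he
  rcases mem_pathE.mp (hM.1 he) with ⟨rfl, ha⟩ | hab
  · exfalso
    -- the vertex `a_a` (or `b_0` when `a = 0`) already has its `pathM` partner in `M`
    rcases Nat.eq_zero_or_pos a with rfl | hpos
    · cases hM.eq_of_mem he (hsub (mem_pathM.mpr ⟨rfl, hn⟩)) (Or.inr rfl)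
    · have := hM.eq_of_mem he (hsub (mem_pathM.mpr ⟨(Nat.sub_add_cancel hpos).symm, by omega⟩))
        (Or.inl rfl)
      simp only [Prod.mk.injEq] at this
      omega
  · exact mem_pathM.mpr hab

lemma unmatchedA_pathM : {a : ℕ | a ≤ n ∧ ∀ b, (a, b) ∉ pathM n} = {0} := by
  ext a
  simp only [Set.mem_ofPred_eq, Set.mem_singleton_iff, mem_pathM, not_and]
  constructor
  · rintro ⟨han, hfree⟩
    by_contra ha
    exact hfree (a - 1) (by omega) (by omega)
  · rintro rfl
    exact ⟨Nat.zero_le n, fun b h => absurd h (by omega)⟩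

lemma unmatchedB_pathM : {b : ℕ | b ≤ n ∧ ∀ a, (a, b) ∉ pathM n} = {n} := by
  ext b
  simp only [Set.mem_ofPred_eq, Set.mem_singleton_iff, mem_pathM, not_and]
  constructor
  · rintro ⟨hbn, hfree⟩
    by_contra hb
    exact hfree (b + 1) rfl (by omega)
  · rintro rfl
    exact ⟨le_rfl, fun _ _ => lt_irrefl _⟩

/-- The edge `(i + 1, i)` blocks the diagonal matching under `L`. -/
def BlocksDiag (i : ℕ) (L : Prefs ℕ ℕ) : Prop :=
  PrefersIn (L.fA (i + 1)) i (i + 1) ∧ PrefersIn (L.fB i) (i + 1) i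

open Classical in
noncomputable def blockCount (n : ℕ) (L : Prefs ℕ ℕ) : ℕ :=
  #{i ∈ range n | BlocksDiag i L}

lemma blockCount_le_of_swapStep {L L' : Prefs ℕ ℕ} (h : SwapStep L L') :
    blockCount n L ≤ blockCount n L' + 1 := by
  classical
  -- the list changed by the swap is `L.fA (j + 1)` or `L.fB j` for a single `j`
  obtain ⟨j, hj⟩ : ∃ j, ∀ i ≠ j, BlocksDiag i L → BlocksDiag i L' := by
    rcases h with ⟨a, -, hA, hB⟩ | ⟨b, -, hB, hA⟩
    · refine ⟨a - 1, fun i hi hbl => ?_⟩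
      rwa [BlocksDiag, hA (i + 1) (by omega), hB i]
    · refine ⟨b, fun i hi hbl => ?_⟩
      rwa [BlocksDiag, hA (i + 1), hB i hi]
  have hsub : {i ∈ range n | BlocksDiag i L} ⊆ insert j {i ∈ range n | BlocksDiag i L'} := by
    intro i hi
    rw [mem_filter] at hi
    rcases eq_or_ne i j with rfl | hij
    · exact mem_insert_self _ _
    · exact mem_insert_of_mem (mem_filter.mpr ⟨hi.1, hj i hij hi.2⟩)
  exact (card_le_card hsub).trans (card_insert_le _ _)

lemma blockCount_pathL : blockCount n (pathL n) = n := by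
  classical
  rw [blockCount, filter_true_of_mem, card_range]
  intro i hi
  rw [mem_range] at hi
  rw [BlocksDiag, pathL_fA (by omega) (by omega), Nat.add_sub_cancel, pathL_fB hi]
  exact ⟨prefersIn_pair (by omega), prefersIn_pair (by omega)⟩

lemma blockCount_eq_zero_of_stableM {L : Prefs ℕ ℕ} {M : Finset (ℕ × ℕ)}
    (hM : IsMatching (pathE n) M) (hcov : ∀ a ≤ n, ∃ b, (a, b) ∈ M)
    (hS : StableM (pathE n) L M) : blockCount n L = 0 := by
  classical
  have hdiag := diagM_subset_of_covers hM hcov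
  rw [blockCount, card_eq_zero, filter_eq_empty_iff]
  intro i hi hbl
  rw [mem_range] at hi
  have hi' : (i, i) ∈ M := hdiag (mem_diagM.mpr ⟨rfl, hi.le⟩)
  have hi1 : (i + 1, i + 1) ∈ M := hdiag (mem_diagM.mpr ⟨rfl, hi⟩)
  refine hS (i + 1, i) ⟨mem_pathE.mpr (Or.inr ⟨rfl, hi⟩), fun h => ?_,
    Or.inr ⟨i + 1, hi1, hbl.1⟩, Or.inr ⟨i, hi', hbl.2⟩⟩
  cases hM.eq_of_mem h hi' (Or.inr rfl)

end Path

/-- For every `n ≥ 1` the path instance satisfies: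
(a) the graph admits a perfect matching;
(b) `pathM n` is the unique stable matching, and it leaves exactly two vertices
    unmatched;
(c) every sequence of swaps leading to preference lists admitting a perfect
    stable matching has length at least `n`. -/
theorem path_instance_needs_n_swaps (n : ℕ) (hn : 1 ≤ n) :
    (∃ M : Finset (ℕ × ℕ), IsMatching (pathE n) M ∧
      (∀ a ≤ n, ∃ b, (a, b) ∈ M) ∧ (∀ b ≤ n, ∃ a, (a, b) ∈ M)) ∧
    (IsMatching (pathE n) (pathM n) ∧ StableM (pathE n) (pathL n) (pathM n) ∧
      (∀ M : Finset (ℕ × ℕ), IsMatching (pathE n) M → StableM (pathE n) (pathL n) M →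
        M = pathM n) ∧
      {a : ℕ | a ≤ n ∧ ∀ b, (a, b) ∉ pathM n}.ncard +
        {b : ℕ | b ≤ n ∧ ∀ a, (a, b) ∉ pathM n}.ncard = 2) ∧
    (∀ (k : ℕ) (L' : Prefs ℕ ℕ), SwapSeq k (pathL n) L' →
      (∃ M : Finset (ℕ × ℕ), IsMatching (pathE n) M ∧
        (∀ a ≤ n, ∃ b, (a, b) ∈ M) ∧ (∀ b ≤ n, ∃ a, (a, b) ∈ M) ∧
        StableM (pathE n) L' M) →
      n ≤ k) := by
  refine ⟨⟨diagM n, isMatching_diagM, fun a ha => ⟨a, mem_diagM.mpr ⟨rfl, ha⟩⟩,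
      fun b hb => ⟨b, mem_diagM.mpr ⟨rfl, hb⟩⟩⟩,
    ⟨isMatching_pathM, stableM_pathM hn, fun M hM hS => eq_pathM_of_stableM hn hM hS, ?_⟩, ?_⟩
  · rw [unmatchedA_pathM, unmatchedB_pathM, Set.ncard_singleton, Set.ncard_singleton]
  · rintro k L' hseq ⟨M, hM, hcov, -, hS⟩
    have h := SwapSeq.le_add (blockCount n) (fun _ _ => blockCount_le_of_swapStep) hseq
    rw [blockCount_pathL, blockCount_eq_zero_of_stableM hM hcov hS] at h
    omega
end

section
/- Let (G, L) be an SMP instance, M a perfect matching of G, and uv a blocking edge of M such that u has degree exactly 2 in G. Let σ be the swap that transposes the two vertices in the preference list ℓ(u). Then with respect to σ(L), the edge uv is not a blocking edge of M, and every edge that is a blocking edge of M with respect to σ(L) was already a blocking edge of M with respect to L. -/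
theorem not_prefersIn_head {γ : Type*} [DecidableEq γ] (l : List γ) (x y : γ) :
    ¬ PrefersIn (y :: l) x y := by
  simp [PrefersIn]

section Blocking

variable {α β : Type*} [DecidableEq α] [DecidableEq β]
  {E M : Finset (α × β)} {L L' : Prefs α β}

theorem Blocking.exists_partner_prefersIn {e : α × β} (h : Blocking E L M e)
    (hmatched : ∃ b, (e.1, b) ∈ M) : ∃ b, (e.1, b) ∈ M ∧ PrefersIn (L.fA e.1) e.2 b := by
  obtain ⟨-, -, hA | hA, -⟩ := h
  · obtain ⟨b, hb⟩ := hmatched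
    exact absurd hb (hA b)
  · exact hA

theorem not_blocking_of_partner_eq_head (hM : IsMatching E M) {a : α} {b : β} {l : List β}
    (hab : (a, b) ∈ M) (hhead : L.fA a = b :: l) (w : β) : ¬ Blocking E L M (a, w) := by
  rintro ⟨-, -, hA | ⟨b', hab', hpref⟩, -⟩
  · exact hA b hab
  · obtain rfl : b' = b := by simpa using hM.2 _ hab' _ hab (Or.inl rfl)
    rw [hhead] at hpref
    exact not_prefersIn_head l w b' hpref

end Blocking

theorem swap_at_degree_two_vertex_fixes_blocking_edge_general {α β : Type*}
    [DecidableEq α] [DecidableEq β]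
    (E : Finset (α × β)) (L L' : Prefs α β) (M : Finset (α × β)) (u : α) (v : β)
    (hL : ValidPrefs E L) (hM : IsMatching E M)
    (hperfA : ∀ a, ∃ b, (a, b) ∈ M)
    (hblock : Blocking E L M (u, v))
    (hσ : ∃ x y : β, L.fA u = [x, y] ∧ L'.fA u = [y, x])
    (hσA : ∀ a, a ≠ u → L'.fA a = L.fA a)
    (hσB : ∀ b, L'.fB b = L.fB b) :
    ¬ Blocking E L' M (u, v) ∧
      ∀ e : α × β, Blocking E L' M e → Blocking E L M e := by
  obtain ⟨x, y, hLu, hLu'⟩ := hσ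
  obtain ⟨b, hbM, hpref⟩ := hblock.exists_partner_prefersIn (hperfA u)
  rw [hLu] at hpref
  have hb_mem : b ∈ [x, y] := hLu ▸ (hL.2.2.1 u b).2 (hM.1 hbM)
  have hb_ne : b ≠ x := by
    rintro rfl
    exact not_prefersIn_head _ _ _ hpref
  obtain rfl : b = y := by simpa [hb_ne] using hb_mem
  have hu_free := not_blocking_of_partner_eq_head hM hbM hLu'
  refine ⟨hu_free v, ?_⟩
  rintro ⟨a, w⟩ he
  by_cases hau : a = u
  · subst hau
    exact absurd he (hu_free w)
  · exact (blocking_congr (hσA a hau) (hσB w)).1 he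

/-- if `M` is a perfect matching, `(u, v)` is a blocking edge of
`M`, `u` has degree exactly 2 and `σ` is the swap transposing the two vertices
of `ℓ(u)` (so `L'` = `σ(L)`), then `(u, v)` is not a blocking edge of `M`
w.r.t. `L'`, and every blocking edge of `M` w.r.t. `L'` was already a blocking
edge of `M` w.r.t. `L`. -/
theorem swap_at_degree_two_vertex_fixes_blocking_edge {α β : Type*}
    [DecidableEq α] [DecidableEq β]
    (E : Finset (α × β)) (L L' : Prefs α β) (M : Finset (α × β)) (u : α) (v : β)
    (hL : ValidPrefs E L) (hM : IsMatching E M)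
    (hperfA : ∀ a, ∃ b, (a, b) ∈ M) (hperfB : ∀ b, ∃ a, (a, b) ∈ M)
    (hblock : Blocking E L M (u, v))
    (hdeg : (E.filter (fun e => e.1 = u)).card = 2)
    (hσ : ∃ x y : β, L.fA u = [x, y] ∧ L'.fA u = [y, x])
    (hσA : ∀ a, a ≠ u → L'.fA a = L.fA a)
    (hσB : ∀ b, L'.fB b = L.fB b) :
    ¬ Blocking E L' M (u, v) ∧
      ∀ e : α × β, Blocking E L' M e → Blocking E L M e :=
  swap_at_degree_two_vertex_fixes_blocking_edge_general E L L' M u v hL hM hperfA hblock hσ hσA hσB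
end

section
/- Let (G, L) be an SMP instance and M a perfect matching of G having at most k blocking edges, each of which is incident to a vertex of degree 2 in G. Then there is a sequence of at most k swaps transforming L into preference lists with respect to which M is a perfect stable matching. -/
theorem List.eq_pair_of_idxOf_lt {γ : Type*} [DecidableEq γ] {l : List γ} {x y : γ}
    (hnd : l.Nodup) (hmem : ∀ z, z ∈ l ↔ z = x ∨ z = y) (hlt : l.idxOf x < l.idxOf y) :
    l = [x, y] := by
  have hne : x ≠ y := by rintro rfl; exact lt_irrefl _ hlt
  have hperm : l.Perm [x, y] :=
    (List.perm_ext_iff_of_nodup hnd (by simp [hne])).2 fun z => by simp [hmem z]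
  have hlen : l.length = 2 := by simpa using hperm.length_eq
  obtain ⟨u, v, rfl⟩ := List.length_eq_two.mp hlen
  have hu := (hmem u).1 (by simp)
  have hv := (hmem v).1 (by simp)
  rcases hu with rfl | rfl <;> rcases hv with rfl | rfl <;> simp_all

theorem mem_iff_of_card_filter_fst_eq_two {α β : Type*} [DecidableEq α] [DecidableEq β]
    {E : Finset (α × β)} {a : α} {b b₀ : β}
    (hdeg : (E.filter (fun e => e.1 = a)).card = 2) (hb : (a, b) ∈ E) (hb₀ : (a, b₀) ∈ E)
    (hne : b ≠ b₀) (b' : β) : (a, b') ∈ E ↔ b' = b ∨ b' = b₀ := by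
  have hsub : {(a, b), (a, b₀)} ⊆ E.filter (fun e => e.1 = a) := by
    simp [Finset.insert_subset_iff, hb, hb₀]
  have heq := Finset.eq_of_subset_of_card_le hsub (by simp [hdeg, hne])
  have := congrArg ((a, b') ∈ ·) heq
  simpa using this.symm

theorem AdjSwap.cons_cons {γ : Type*} (x y : γ) (s : List γ) :
    AdjSwap (x :: y :: s) (y :: x :: s) :=
  ⟨[], s, x, y, rfl, rfl⟩

namespace Prefs

variable {α β : Type*}

def symm (L : Prefs α β) : Prefs β α := ⟨L.fB, L.fA⟩

def updateA [DecidableEq α] (L : Prefs α β) (a : α) (l : List β) : Prefs α β :=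
  ⟨Function.update L.fA a l, L.fB⟩

end Prefs

section

variable {α β : Type*} {E M : Finset (α × β)} {L L' : Prefs α β}

theorem mem_map_prodComm {s : Finset (α × β)} {a : α} {b : β} :
    (b, a) ∈ s.map (Equiv.prodComm α β).toEmbedding ↔ (a, b) ∈ s := by
  simp

theorem card_filter_fst_map_prodComm [DecidableEq β] (b : β) :
    ((E.map (Equiv.prodComm α β).toEmbedding).filter (fun e => e.1 = b)).card =
      (E.filter (fun e => e.2 = b)).card := by
  rw [Finset.filter_map, Finset.card_map]
  rfl

theorem swapStep_symm_iff : SwapStep L.symm L'.symm ↔ SwapStep L L' := Or.comm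

theorem swapStep_updateA [DecidableEq α] {a : α} {l : List β} (h : AdjSwap (L.fA a) l) :
    SwapStep L (L.updateA a l) :=
  Or.inl ⟨a, by simpa [Prefs.updateA] using h, fun _ h => Function.update_of_ne h _ _,
    fun _ => rfl⟩

theorem validPrefs_symm_iff :
    ValidPrefs (E.map (Equiv.prodComm α β).toEmbedding) L.symm ↔ ValidPrefs E L := by
  simp only [ValidPrefs, Prefs.symm, mem_map_prodComm]
  constructor <;> rintro ⟨h₁, h₂, h₃, h₄⟩ <;> exact ⟨h₂, h₁, fun a b => h₄ b a, fun a b => h₃ b a⟩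

theorem ValidPrefs.updateA [DecidableEq α] (hL : ValidPrefs E L) {a : α} {l : List β}
    (hl : l.Perm (L.fA a)) : ValidPrefs E (L.updateA a l) := by
  refine ⟨fun a' => ?_, hL.2.1, fun a' b => ?_, hL.2.2.2⟩
  · rcases eq_or_ne a' a with rfl | h
    · simpa [Prefs.updateA] using hl.nodup_iff.2 (hL.1 a')
    · simpa [Prefs.updateA, h] using hL.1 a'
  · rcases eq_or_ne a' a with rfl | h
    · simpa [Prefs.updateA, hl.mem_iff] using hL.2.2.1 a' b
    · simpa [Prefs.updateA, h] using hL.2.2.1 a' b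

theorem IsMatching.map_prodComm (hM : IsMatching E M) :
    IsMatching (E.map (Equiv.prodComm α β).toEmbedding)
      (M.map (Equiv.prodComm α β).toEmbedding) := by
  refine ⟨Finset.map_subset_map.2 hM.1, ?_⟩
  simp only [Finset.mem_map_equiv, Equiv.prodComm_symm]
  intro e he e' he' h
  simpa using hM.2 _ he _ he' h.symm

variable [DecidableEq α] [DecidableEq β]

theorem blocking_map_prodComm_iff {e : α × β} :
    Blocking (E.map (Equiv.prodComm α β).toEmbedding) L.symm
      (M.map (Equiv.prodComm α β).toEmbedding) e.swap ↔ Blocking E L M e := by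
  simp only [Blocking, Prefs.symm, Prod.fst_swap, Prod.snd_swap, Finset.mem_map_equiv,
    Equiv.prodComm_symm, Equiv.prodComm_apply, Prod.swap_swap, Prod.swap_prod_mk]
  tauto

theorem finite_setOf_blocking (E : Finset (α × β)) (L : Prefs α β) (M : Finset (α × β)) :
    {e | Blocking E L M e}.Finite :=
  E.finite_toSet.subset fun _ he => he.1

theorem blocking_updateA_iff_of_ne {a : α} {l : List β} {e : α × β} (h : e.1 ≠ a) :
    Blocking E (L.updateA a l) M e ↔ Blocking E L M e := by
  simp [Blocking, Prefs.updateA, h]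

theorem Blocking.prefersIn_fA (hM : IsMatching E M) {a : α} {b b₀ : β}
    (he : Blocking E L M (a, b)) (hb₀ : (a, b₀) ∈ M) : PrefersIn (L.fA a) b b₀ := by
  rcases he.2.2.1 with h | ⟨b', hb', hp⟩
  · exact absurd hb₀ (h b₀)
  · obtain rfl : b' = b₀ := congrArg Prod.snd (hM.2 _ hb' _ hb₀ (Or.inl rfl))
    exact hp

theorem not_blocking_of_fA_eq_cons (hM : IsMatching E M) {e : α × β} {b₀ : β} {t : List β}
    (hb₀ : (e.1, b₀) ∈ M) (hl : L.fA e.1 = b₀ :: t) : ¬ Blocking E L M e := by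
  intro he
  have := (he.prefersIn_fA hM hb₀).2
  simp [hl] at this

theorem exists_swapStep_of_blocking_of_card_filter_fst_eq_two (hL : ValidPrefs E L)
    (hM : IsMatching E M) {a : α} {b b₀ : β} (hb₀ : (a, b₀) ∈ M) (he : Blocking E L M (a, b))
    (hdeg : (E.filter (fun e => e.1 = a)).card = 2) :
    ∃ L', SwapStep L L' ∧ ValidPrefs E L' ∧
      ∀ e, Blocking E L' M e → Blocking E L M e ∧ e.1 ≠ a := by
  have hne : b ≠ b₀ := fun h => he.2.1 (h ▸ hb₀)
  have hmemE := mem_iff_of_card_filter_fst_eq_two hdeg he.1 (hM.1 hb₀) hne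
  have hlist : L.fA a = [b, b₀] :=
    List.eq_pair_of_idxOf_lt (hL.1 a) (fun z => (hL.2.2.1 a z).trans (hmemE z))
      (he.prefersIn_fA hM hb₀).2
  refine ⟨L.updateA a [b₀, b], swapStep_updateA (hlist ▸ AdjSwap.cons_cons _ _ _),
    hL.updateA (hlist ▸ List.Perm.swap _ _ _), fun e he' => ?_⟩
  have hea : e.1 ≠ a := by
    rintro rfl
    exact not_blocking_of_fA_eq_cons hM hb₀ (t := [b]) (by simp [Prefs.updateA]) he'
  exact ⟨(blocking_updateA_iff_of_ne hea).1 he', hea⟩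

theorem exists_swapStep_of_blocking (hL : ValidPrefs E L) (hM : IsMatching E M)
    (hperfA : ∀ a, ∃ b, (a, b) ∈ M) (hperfB : ∀ b, ∃ a, (a, b) ∈ M) {e : α × β}
    (he : Blocking E L M e)
    (hdeg : (E.filter (fun e' => e'.1 = e.1)).card = 2 ∨
      (E.filter (fun e' => e'.2 = e.2)).card = 2) :
    ∃ L', SwapStep L L' ∧ ValidPrefs E L' ∧
      ∀ e', Blocking E L' M e' → Blocking E L M e' ∧ e' ≠ e := by
  obtain ⟨a, b⟩ := e
  rcases hdeg with hdeg | hdeg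
  · obtain ⟨b₀, hb₀⟩ := hperfA a
    obtain ⟨L', hstep, hvalid, hblock⟩ :=
      exists_swapStep_of_blocking_of_card_filter_fst_eq_two hL hM hb₀ he hdeg
    refine ⟨L', hstep, hvalid, fun e' h => ⟨(hblock e' h).1, ?_⟩⟩
    rintro rfl
    exact (hblock _ h).2 rfl
  · obtain ⟨a₀, ha₀⟩ := hperfB b
    obtain ⟨L', hstep, hvalid, hblock⟩ :=
      exists_swapStep_of_blocking_of_card_filter_fst_eq_two (validPrefs_symm_iff.2 hL)
        hM.map_prodComm (mem_map_prodComm.2 ha₀) (blocking_map_prodComm_iff.2 he)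
        ((card_filter_fst_map_prodComm b).trans hdeg)
    refine ⟨L'.symm, swapStep_symm_iff.1 hstep, validPrefs_symm_iff.1 hvalid, fun e' h => ?_⟩
    obtain ⟨hblock', hne⟩ := hblock e'.swap (blocking_map_prodComm_iff.2 h)
    refine ⟨blocking_map_prodComm_iff.1 hblock', ?_⟩
    rintro rfl
    exact hne rfl

end

/-- if `M` is a perfect matching with at most `k` blocking edges,
each of which is incident to a vertex of degree exactly 2, then some sequence
of at most `k` swaps turns `L` into lists w.r.t. which `M` is a (perfect)
stable matching. -/
theorem perfect_matching_stabilized_by_k_swaps {α β : Type*}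
    [DecidableEq α] [DecidableEq β]
    (E : Finset (α × β)) (L : Prefs α β) (M : Finset (α × β)) (k : ℕ)
    (hL : ValidPrefs E L) (hM : IsMatching E M)
    (hperfA : ∀ a, ∃ b, (a, b) ∈ M) (hperfB : ∀ b, ∃ a, (a, b) ∈ M)
    (hcount : {e : α × β | Blocking E L M e}.ncard ≤ k)
    (hdeg : ∀ e : α × β, Blocking E L M e →
      (E.filter (fun e' => e'.1 = e.1)).card = 2 ∨
        (E.filter (fun e' => e'.2 = e.2)).card = 2) :
    ∃ k' ≤ k, ∃ L' : Prefs α β, SwapSeq k' L L' ∧ StableM E L' M := by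
  induction k generalizing L with
  | zero =>
    have hempty := (Set.ncard_eq_zero (finite_setOf_blocking E L M)).1 (Nat.le_zero.1 hcount)
    exact ⟨0, le_rfl, L, rfl, fun e he => hempty.subset he⟩
  | succ k ih =>
    by_cases hstab : StableM E L M
    · exact ⟨0, Nat.zero_le _, L, rfl, hstab⟩
    obtain ⟨e, he⟩ : ∃ e, Blocking E L M e := by simpa [StableM] using hstab
    obtain ⟨L'', hstep, hvalid, hsub⟩ :=
      exists_swapStep_of_blocking hL hM hperfA hperfB he (hdeg e he)
    have hlt : {e' | Blocking E L'' M e'}.ncard < {e' | Blocking E L M e'}.ncard :=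
      Set.ncard_lt_ncard ⟨fun e' h => (hsub e' h).1, fun h => (hsub e (h he)).2 rfl⟩
        (finite_setOf_blocking E L M)
    obtain ⟨k', hk', L', hseq, hstable⟩ :=
      ih L'' hvalid (by omega) fun e' h => hdeg e' (hsub e' h).1
    exact ⟨k' + 1, by omega, L', ⟨L'', hstep, hseq⟩, hstable⟩
end
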